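/- Let A, B : ℝ → ℝ be C² functions and let u, v : ℝ² → ℝ be two C² functions, each solving L_u(L_u u) = 0 (respectively L_v(L_v v) = 0) on all of ℝ², with u(x,0) = v(x,0) = B(x) and (L_u u)(x,0) = (L_v v)(x,0) = A(x) for all x ∈ ℝ. Set x(c,t) := (A(c)/2)·t² + B(c)·t + c and Ω := {(x(c,t), t) : c, t ∈ ℝ}. Then u = v on Ω; more precisely, u(x(c,t), t) = v(x(c,t), t) = A(c)·t + B(c) for all c, t ∈ ℝ. -/

import Mathlib

/-- The operator `L_u` acting on `v`:  `(L_u v)(x,t) = ∂v/∂t + u·∂v/∂x`,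
with coordinates `(x,t)` on `ℝ × ℝ`. -/
noncomputable def Lop (u v : ℝ × ℝ → ℝ) : ℝ × ℝ → ℝ :=
  fun p => fderiv ℝ v p (0, 1) + u p * fderiv ℝ v p (1, 0)

/-!
Fix `c` and put `a = A c`, `b = B c`, `γ τ = (a τ² / 2 + b τ + c, τ)`. For any `v`,
`d/dτ v (γ τ) = L_u v (γ τ) + (a τ + b - u (γ τ)) ∂ₓv (γ τ)`, so the deviations
`h = u ∘ γ - (a τ + b)` and `k = L_u u ∘ γ - a` satisfy the linear system
`h' = k - h ∂ₓu`, `k' = -h ∂ₓ(L_u u)` (using `L_u (L_u u) = 0`). Both vanish at `τ = 0` by the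
initial data, so Grönwall's inequality forces `h = k = 0`.
-/

open Set

section Gronwall

variable {E : Type*} [NormedAddCommGroup E] [NormedSpace ℝ E] {f f' : ℝ → E} {K : ℝ → ℝ}

theorem eq_zero_of_norm_deriv_le_mul_norm_of_nonneg (hf : ∀ t, HasDerivAt f (f' t) t)
    (hK : Continuous K) (hbound : ∀ t, ‖f' t‖ ≤ K t * ‖f t‖) (h0 : f 0 = 0) {t : ℝ}
    (ht : 0 ≤ t) : f t = 0 := by
  obtain ⟨M, hM⟩ := (isCompact_Icc (a := 0) (b := t)).exists_bound_of_continuousOn hK.continuousOn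
  have key := norm_le_gronwallBound_of_norm_deriv_right_le (δ := 0) (K := M) (ε := 0)
    (fun s _ => (hf s).continuousAt.continuousWithinAt) (fun s _ => (hf s).hasDerivWithinAt)
    (by simp [h0])
    (fun s hs => by
      have hKM : K s ≤ M := (le_abs_self _).trans (hM s (Ico_subset_Icc_self hs))
      linarith [hbound s, mul_le_mul_of_nonneg_right hKM (norm_nonneg (f s))])
    t (right_mem_Icc.2 ht)
  rwa [gronwallBound_ε0_δ0, norm_le_zero_iff] at key

theorem eq_zero_of_norm_deriv_le_mul_norm (hf : ∀ t, HasDerivAt f (f' t) t)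
    (hK : Continuous K) (hbound : ∀ t, ‖f' t‖ ≤ K t * ‖f t‖) (h0 : f 0 = 0) (t : ℝ) :
    f t = 0 := by
  rcases le_total 0 t with ht | ht
  · exact eq_zero_of_norm_deriv_le_mul_norm_of_nonneg hf hK hbound h0 ht
  · have hrev : ∀ s : ℝ, HasDerivAt (fun s => f (-s)) ((-1 : ℝ) • f' (-s)) s := fun s =>
      (hf (-s)).scomp s (hasDerivAt_neg s)
    simpa using eq_zero_of_norm_deriv_le_mul_norm_of_nonneg hrev (hK.comp continuous_neg)
      (fun s => by simpa using hbound (-s)) (by simpa using h0) (neg_nonneg.2 ht)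

end Gronwall

theorem ContDiff.lop {n : WithTop ℕ∞} {u v : ℝ × ℝ → ℝ} (hu : ContDiff ℝ n u)
    (hv : ContDiff ℝ (n + 1) v) : ContDiff ℝ n (Lop u v) := by
  have hv' : ContDiff ℝ n (fderiv ℝ v) := hv.fderiv_right le_rfl
  exact (hv'.clm_apply contDiff_const).add (hu.mul (hv'.clm_apply contDiff_const))

theorem hasDerivAt_comp_of_lop {u v : ℝ × ℝ → ℝ} {γ : ℝ → ℝ × ℝ} {s t : ℝ}
    (hv : DifferentiableAt ℝ v (γ t)) (hγ : HasDerivAt γ (s, 1) t) :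
    HasDerivAt (fun τ => v (γ τ))
      (Lop u v (γ t) + (s - u (γ t)) * fderiv ℝ v (γ t) (1, 0)) t := by
  refine (hv.hasFDerivAt.comp_hasDerivAt t hγ).congr_deriv ?_
  have hdir : ((s, 1) : ℝ × ℝ) = s • ((1 : ℝ), (0 : ℝ)) + ((0 : ℝ), (1 : ℝ)) := by
    simp
  rw [hdir, map_add, map_smul, smul_eq_mul, Lop]
  ring

noncomputable def characteristic (a b c t : ℝ) : ℝ × ℝ := (a / 2 * t ^ 2 + b * t + c, t)

theorem hasDerivAt_characteristic (a b c t : ℝ) :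
    HasDerivAt (characteristic a b c) (a * t + b, 1) t := by
  refine HasDerivAt.prodMk ?_ (hasDerivAt_id t)
  convert (((hasDerivAt_pow 2 t).const_mul (a / 2)).add
    ((hasDerivAt_id t).const_mul b)).add_const c using 1
  simp only [id_eq, Pi.add_apply]
  ring

theorem norm_linear_system_le (x : ℝ × ℝ) (p q : ℝ) :
    ‖(x.2 - x.1 * p, -(x.1 * q))‖ ≤ (1 + |p| + |q|) * ‖x‖ := by
  have h1 : |x.1| ≤ ‖x‖ := norm_fst_le x
  have h2 : |x.2| ≤ ‖x‖ := norm_snd_le x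
  have hx := norm_nonneg x
  have hp := mul_nonneg (abs_nonneg p) hx
  have hq := mul_nonneg (abs_nonneg q) hx
  refine max_le ?_ ?_
  · calc ‖x.2 - x.1 * p‖ ≤ |x.2| + |x.1| * |p| := by
          rw [Real.norm_eq_abs, ← abs_mul]; exact abs_sub _ _
      _ ≤ (1 + |p| + |q|) * ‖x‖ := by
          linarith [mul_le_mul_of_nonneg_right h1 (abs_nonneg p)]
  · rw [norm_neg, Real.norm_eq_abs, abs_mul]
    linarith [mul_le_mul_of_nonneg_right h1 (abs_nonneg q)]

theorem apply_characteristic_of_lop_lop_eq_zero {A B : ℝ → ℝ} {u : ℝ × ℝ → ℝ}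
    (hu : ContDiff ℝ 2 u) (hpde : ∀ p, Lop u (Lop u u) p = 0) (hu0 : ∀ x, u (x, 0) = B x)
    (huA : ∀ x, Lop u u (x, 0) = A x) (c t : ℝ) :
    u (characteristic (A c) (B c) c t) = A c * t + B c := by
  set a := A c
  set b := B c
  set γ := characteristic a b c
  set w := Lop u u
  have hw : ContDiff ℝ 1 w := (hu.of_le one_le_two).lop (by norm_num; exact hu)
  let ux τ := fderiv ℝ u (γ τ) (1, 0)
  let wx τ := fderiv ℝ w (γ τ) (1, 0)
  let f : ℝ → ℝ × ℝ := fun τ => (u (γ τ) - (a * τ + b), w (γ τ) - a)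
  have hf : ∀ τ, HasDerivAt f ((f τ).2 - (f τ).1 * ux τ, -((f τ).1 * wx τ)) τ := by
    intro τ
    have hu' := hasDerivAt_comp_of_lop (u := u) ((hu.differentiable two_ne_zero) (γ τ))
      (hasDerivAt_characteristic a b c τ)
    have hw' := hasDerivAt_comp_of_lop (u := u) ((hw.differentiable one_ne_zero) (γ τ))
      (hasDerivAt_characteristic a b c τ)
    rw [hpde] at hw'
    have hline := ((hasDerivAt_id' τ).const_mul a).add_const b
    refine ((hu'.sub hline).prodMk (hw'.sub_const a)).congr_deriv ?_
    simp only [f, ux, wx, Prod.mk.injEq]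
    constructor <;> ring
  have hK : Continuous fun τ => 1 + |ux τ| + |wx τ| := by
    have hγ : Continuous γ := by unfold γ characteristic; fun_prop
    have hux : Continuous ux :=
      ((hu.continuous_fderiv two_ne_zero).clm_apply continuous_const).comp hγ
    have hwx : Continuous wx :=
      ((hw.continuous_fderiv one_ne_zero).clm_apply continuous_const).comp hγ
    fun_prop
  have h0 : f 0 = 0 := by
    simp [f, γ, characteristic, hu0, huA, a, b, w]
  have := congrArg Prod.fst (eq_zero_of_norm_deriv_le_mul_norm hf hK
    (fun τ => norm_linear_system_le (f τ) (ux τ) (wx τ)) h0 t)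
  simpa [f, sub_eq_zero] using this

theorem stmt12_general (A B : ℝ → ℝ)
    (u v : ℝ × ℝ → ℝ) (hu : ContDiff ℝ 2 u) (hv : ContDiff ℝ 2 v)
    (hupde : ∀ p : ℝ × ℝ, Lop u (Lop u u) p = 0)
    (hvpde : ∀ p : ℝ × ℝ, Lop v (Lop v v) p = 0)
    (hu0 : ∀ x : ℝ, u (x, 0) = B x) (hv0 : ∀ x : ℝ, v (x, 0) = B x)
    (huA : ∀ x : ℝ, Lop u u (x, 0) = A x) (hvA : ∀ x : ℝ, Lop v v (x, 0) = A x)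
    (X : ℝ → ℝ → ℝ) (hX : ∀ c t, X c t = A c / 2 * t ^ 2 + B c * t + c) :
    (∀ c t : ℝ, u (X c t, t) = A c * t + B c ∧ v (X c t, t) = A c * t + B c) ∧
    ∀ p ∈ {p : ℝ × ℝ | ∃ c t : ℝ, p = (X c t, t)}, u p = v p := by
  have hchar : ∀ c t, (X c t, t) = characteristic (A c) (B c) c t := fun c t => by
    rw [hX, characteristic]
  have hu' := apply_characteristic_of_lop_lop_eq_zero hu hupde hu0 huA
  have hv' := apply_characteristic_of_lop_lop_eq_zero hv hvpde hv0 hvA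
  refine ⟨fun c t => ?_, ?_⟩
  · rw [hchar]
    exact ⟨hu' c t, hv' c t⟩
  · rintro p ⟨c, t, rfl⟩
    rw [hchar, hu', hv']

theorem stmt12 (A B : ℝ → ℝ) (hA : ContDiff ℝ 2 A) (hB : ContDiff ℝ 2 B)
    (u v : ℝ × ℝ → ℝ) (hu : ContDiff ℝ 2 u) (hv : ContDiff ℝ 2 v)
    (hupde : ∀ p : ℝ × ℝ, Lop u (Lop u u) p = 0)
    (hvpde : ∀ p : ℝ × ℝ, Lop v (Lop v v) p = 0)
    (hu0 : ∀ x : ℝ, u (x, 0) = B x) (hv0 : ∀ x : ℝ, v (x, 0) = B x)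
    (huA : ∀ x : ℝ, Lop u u (x, 0) = A x) (hvA : ∀ x : ℝ, Lop v v (x, 0) = A x)
    (X : ℝ → ℝ → ℝ) (hX : ∀ c t, X c t = A c / 2 * t ^ 2 + B c * t + c) :
    (∀ c t : ℝ, u (X c t, t) = A c * t + B c ∧ v (X c t, t) = A c * t + B c) ∧
    ∀ p ∈ {p : ℝ × ℝ | ∃ c t : ℝ, p = (X c t, t)}, u p = v p :=
  stmt12_general A B u v hu hv hupde hvpde hu0 hv0 huA hvA X hX
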